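/- Let P be the distribution on ℝ with density f(x) = 2/5 on [0,1/2], 8/5 on (1/2,1], 0 otherwise. Then {11/32, 25/32} is the unique optimal set of two-means for P, and the second quantization error is V₂(P) = 317/15360. -/

import Mathlib

open Real MeasureTheory

/-- The probability measure on `ℝ` with density `2/5` on `[0,1/2]`, `8/5` on `(1/2,1]`,
and `0` otherwise. -/
noncomputable def P17 : Measure ℝ :=
  (volume : Measure ℝ).withDensity fun x =>
    ENNReal.ofReal
      (if 0 ≤ x ∧ x ≤ 1/2 then 2/5 else if 1/2 < x ∧ x ≤ 1 then 8/5 else 0)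

/-- Distortion error of a finite set `α` for `P17`. -/
noncomputable def distortion17 (α : Finset ℝ) : ℝ :=
  ∫ x, sInf ((fun a => (x - a) ^ 2) '' (α : Set ℝ)) ∂P17

section Aux17
open ENNReal NNReal Set

noncomputable def dens (x : ℝ) : ℝ :=
  if 0 ≤ x ∧ x ≤ 1/2 then 2/5 else if 1/2 < x ∧ x ≤ 1 then 8/5 else 0

lemma dens_meas : Measurable dens := by
  unfold dens
  refine Measurable.ite ?_ measurable_const (Measurable.ite ?_ measurable_const measurable_const)
  · exact (measurableSet_Icc (a := (0:ℝ)) (b := 1/2)).congr (by ext x; simp [Set.mem_Icc])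
  · exact (measurableSet_Ioc (a := (1/2:ℝ)) (b := 1)).congr (by ext x; simp [Set.mem_Ioc])

lemma integral_P17 (g : ℝ → ℝ) (hg : Continuous g) :
    ∫ x, g x ∂P17 =
      (2/5) * (∫ x in (0:ℝ)..(1/2), g x) + (8/5) * (∫ x in (1/2:ℝ)..1, g x) := by
  have hP : P17 = (volume : Measure ℝ).withDensity fun x => ((dens x).toNNReal : ℝ≥0∞) := rfl
  rw [hP, integral_withDensity_eq_integral_smul (f := fun x => (dens x).toNNReal)
      (dens_meas.real_toNNReal) g]
  have hpt : (fun x : ℝ => (dens x).toNNReal • g x) = fun x =>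
      Set.indicator (Set.Icc 0 (1/2)) (fun x => (2/5) * g x) x
        + Set.indicator (Set.Ioc (1/2) 1) (fun x => (8/5) * g x) x := by
    funext x
    simp only [NNReal.smul_def, Real.coe_toNNReal', dens, Set.indicator_apply,
      Set.mem_Icc, Set.mem_Ioc]
    split_ifs with h1 h2
    · exact absurd h2.1 (by linarith [h1.2])
    · rw [smul_eq_mul, max_eq_left (by norm_num : (0:ℝ) ≤ 2/5)]; ring
    · rw [smul_eq_mul, max_eq_left (by norm_num : (0:ℝ) ≤ 8/5)]; ring
    · simp
  rw [hpt]
  have hint1 : Integrable (Set.indicator (Set.Icc (0:ℝ) (1/2)) (fun x => (2/5) * g x)) :=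
    ((continuous_const.mul hg : Continuous fun x => (2/5:ℝ) * g x).integrableOn_Icc).integrable_indicator measurableSet_Icc
  have hint2 : Integrable (Set.indicator (Set.Ioc (1/2:ℝ) 1) (fun x => (8/5) * g x)) :=
    (((continuous_const.mul hg : Continuous fun x => (8/5:ℝ) * g x).integrableOn_Icc (a := 1/2) (b := 1)).mono_set
      Set.Ioc_subset_Icc_self).integrable_indicator measurableSet_Ioc
  rw [integral_add hint1 hint2, integral_indicator measurableSet_Icc,
    integral_indicator measurableSet_Ioc, MeasureTheory.integral_Icc_eq_integral_Ioc,
    ← intervalIntegral.integral_of_le (by norm_num : (0:ℝ) ≤ 1/2),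
    ← intervalIntegral.integral_of_le (by norm_num : (1/2:ℝ) ≤ 1),
    intervalIntegral.integral_const_mul, intervalIntegral.integral_const_mul]

lemma sInf_pair_eq (a b x : ℝ) :
    sInf ((fun t => (x - t) ^ 2) '' (({a, b} : Finset ℝ) : Set ℝ)) =
      min ((x - a) ^ 2) ((x - b) ^ 2) := by
  have h : (({a, b} : Finset ℝ) : Set ℝ) = {a, b} := by simp
  rw [h, Set.image_pair, csInf_pair]

lemma min_cont (a b : ℝ) : Continuous fun x : ℝ => min ((x - a) ^ 2) ((x - b) ^ 2) :=
  Continuous.min (by fun_prop) (by fun_prop)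

lemma dist_pair (a b : ℝ) :
    distortion17 {a, b} =
      (2/5) * (∫ x in (0:ℝ)..(1/2), min ((x - a) ^ 2) ((x - b) ^ 2))
        + (8/5) * (∫ x in (1/2:ℝ)..1, min ((x - a) ^ 2) ((x - b) ^ 2)) := by
  have h : distortion17 {a, b} = ∫ x, min ((x - a) ^ 2) ((x - b) ^ 2) ∂P17 := by
    unfold distortion17
    congr 1
    funext x
    exact sInf_pair_eq a b x
  rw [h]
  exact integral_P17 _ (min_cont a b)

lemma Ipoly (p q c : ℝ) : (∫ x in p..q, (x - c) ^ 2) = ((q - c) ^ 3 - (p - c) ^ 3) / 3 := by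
  rw [intervalIntegral.integral_comp_sub_right (fun x => x ^ 2) c, integral_pow]
  norm_num

lemma splitR (p q a b : ℝ) (hab : a ≤ b) (hpq : p ≤ q) (hm : q ≤ (a + b) / 2) :
    (∫ x in p..q, min ((x - a) ^ 2) ((x - b) ^ 2)) = ((q - a) ^ 3 - (p - a) ^ 3) / 3 := by
  rw [← Ipoly p q a]
  apply intervalIntegral.integral_congr
  intro x hx
  rw [Set.uIcc_of_le hpq] at hx
  have hx2 : x ≤ (a + b) / 2 := le_trans hx.2 hm
  exact min_eq_left (by nlinarith)

lemma splitL (p q a b : ℝ) (hab : a ≤ b) (hpq : p ≤ q) (hm : (a + b) / 2 ≤ p) :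
    (∫ x in p..q, min ((x - a) ^ 2) ((x - b) ^ 2)) = ((q - b) ^ 3 - (p - b) ^ 3) / 3 := by
  rw [← Ipoly p q b]
  apply intervalIntegral.integral_congr
  intro x hx
  rw [Set.uIcc_of_le hpq] at hx
  have hx2 : (a + b) / 2 ≤ x := le_trans hm hx.1
  exact min_eq_right (by nlinarith)

lemma splitM (p q a b : ℝ) (hab : a ≤ b) (h1 : p ≤ (a + b) / 2) (h2 : (a + b) / 2 ≤ q) :
    (∫ x in p..q, min ((x - a) ^ 2) ((x - b) ^ 2)) =
      (((a + b) / 2 - a) ^ 3 - (p - a) ^ 3) / 3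
        + ((q - b) ^ 3 - ((a + b) / 2 - b) ^ 3) / 3 := by
  rw [← intervalIntegral.integral_add_adjacent_intervals (b := (a + b) / 2)
      ((min_cont a b).intervalIntegrable _ _) ((min_cont a b).intervalIntegrable _ _),
    splitR p ((a + b) / 2) a b hab h1 le_rfl, splitL ((a + b) / 2) q a b hab h2 le_rfl]

set_option maxHeartbeats 2000000 in
lemma pair_lower (a b : ℝ) (hab : a ≤ b) :
    317/15360 ≤ distortion17 {a, b} ∧
      (distortion17 {a, b} ≤ 317/15360 → a = 11/32 ∧ b = 25/32) := by
  have hd := dist_pair a b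
  rcases le_total ((a + b) / 2) 0 with hm | hm
  · rw [splitL 0 (1/2) a b hab (by norm_num) (by linarith),
      splitL (1/2) 1 a b hab (by norm_num) (by linarith)] at hd
    refine ⟨by rw [hd]; nlinarith [sq_nonneg (b - 13/20)], fun hle => ?_⟩
    exfalso; rw [hd] at hle; nlinarith [sq_nonneg (b - 13/20)]
  · rcases le_total ((a + b) / 2) (1/2) with hm2 | hm2
    · have h0 : 0 ≤ a + b := by linarith
      have h1 : a + b ≤ 1 := by linarith
      rw [splitM 0 (1/2) a b hab (by linarith) hm2,
        splitL (1/2) 1 a b hab (by norm_num) (by linarith)] at hd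
      have key : (1:ℝ)/48 ≤ distortion17 {a, b} := by
        rw [hd]
        nlinarith [sq_nonneg (a-1/4), sq_nonneg (b-3/4), sq_nonneg (a+b-1), sq_nonneg (b-a-1/2),
          mul_nonneg h0 (sub_nonneg.2 hab), mul_nonneg (sub_nonneg.2 h1) (sub_nonneg.2 hab),
          mul_nonneg h0 (sub_nonneg.2 h1), sq_nonneg (a+b), mul_nonneg (mul_nonneg h0 h0) h0,
          mul_nonneg (sub_nonneg.2 h1) (sq_nonneg (b-3/4)), mul_nonneg h0 (sq_nonneg (a-1/4)),
          mul_nonneg (sub_nonneg.2 h1) (sq_nonneg (a-1/4)), mul_nonneg h0 (sq_nonneg (b-3/4)),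
          mul_nonneg (sub_nonneg.2 hab) (sq_nonneg (a+b-1))]
      exact ⟨by linarith, fun hle => absurd hle (by linarith)⟩
    · rcases le_total ((a + b) / 2) 1 with hm3 | hm3
      · have h0 : 1 ≤ a + b := by linarith
        have h1 : a + b ≤ 2 := by linarith
        rw [splitR 0 (1/2) a b hab (by norm_num) hm2,
          splitM (1/2) 1 a b hab hm2 hm3] at hd
        have key : (1/100) * ((a - 11/32) ^ 2 + (b - 25/32) ^ 2) ≤
            distortion17 {a, b} - 317/15360 := by
          rw [hd]
          nlinarith [sq_nonneg ((49/100)*(a-b+7/16) + (2/5)*(a+b-9/8)^2 - (1/5)*(a+b-9/8)),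
            mul_nonneg (mul_nonneg (sub_nonneg.2 h0) (sub_nonneg.2 h1)) (sq_nonneg (a+b-9/8)),
            mul_nonneg (sq_nonneg (a+b-9/8)) (sub_nonneg.2 h0), sq_nonneg (a+b-9/8)]
        constructor
        · nlinarith [sq_nonneg (a - 11/32), sq_nonneg (b - 25/32)]
        · intro hle
          have ha : (a - 11/32) ^ 2 = 0 :=
            le_antisymm (by nlinarith [sq_nonneg (b - 25/32)]) (sq_nonneg _)
          have hb : (b - 25/32) ^ 2 = 0 :=
            le_antisymm (by nlinarith [sq_nonneg (a - 11/32)]) (sq_nonneg _)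
          have ha' := (pow_eq_zero_iff two_ne_zero).mp ha
          have hb' := (pow_eq_zero_iff two_ne_zero).mp hb
          constructor <;> linarith
      · rw [splitR 0 (1/2) a b hab (by norm_num) (by linarith),
          splitR (1/2) 1 a b hab (by norm_num) (by linarith)] at hd
        refine ⟨by rw [hd]; nlinarith [sq_nonneg (a - 13/20)], fun hle => ?_⟩
        exfalso; rw [hd] at hle; nlinarith [sq_nonneg (a - 13/20)]

lemma exists_pair (α : Finset ℝ) (hne : α.Nonempty) (hc : α.card ≤ 2) :
    ∃ a b : ℝ, a ≤ b ∧ α = {a, b} := by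
  rcases Nat.lt_or_ge α.card 2 with h | h
  · have h1 : α.card = 1 := by
      have := Finset.card_pos.mpr hne
      omega
    obtain ⟨x, hx⟩ := Finset.card_eq_one.mp h1
    exact ⟨x, x, le_rfl, by rw [hx]; simp⟩
  · have h2 : α.card = 2 := le_antisymm hc h
    obtain ⟨a, b, hne', hab⟩ := Finset.card_eq_two.mp h2
    rcases le_total a b with h' | h'
    · exact ⟨a, b, h', hab⟩
    · exact ⟨b, a, h', by rw [hab, Finset.pair_comm]⟩

lemma part1 : distortion17 {11/32, 25/32} = 317 / 15360 := by
  have hd := dist_pair (11/32) (25/32)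
  rw [splitR 0 (1/2) (11/32) (25/32) (by norm_num) (by norm_num) (by norm_num),
    splitM (1/2) 1 (11/32) (25/32) (by norm_num) (by norm_num) (by norm_num)] at hd
  rw [hd]
  norm_num

end Aux17

theorem stmt_17 :
    distortion17 {11/32, 25/32} = 317 / 15360 ∧
    sInf {v : ℝ | ∃ α : Finset ℝ, α.Nonempty ∧ α.card ≤ 2 ∧ v = distortion17 α} =
      317 / 15360 ∧
    ∀ α : Finset ℝ, α.Nonempty → α.card ≤ 2 → distortion17 α = 317 / 15360 →
      α = {11/32, 25/32} := by
  refine ⟨part1, ?_, ?_⟩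
  · apply IsLeast.csInf_eq
    constructor
    · exact ⟨{11/32, 25/32}, ⟨11/32, by simp⟩,
        le_trans (Finset.card_insert_le _ _) (by simp), part1.symm⟩
    · rintro v ⟨α, hne, hc, rfl⟩
      obtain ⟨a, b, hab, rfl⟩ := exists_pair α hne hc
      exact (pair_lower a b hab).1
  · intro α hne hc hd
    obtain ⟨a, b, hab, rfl⟩ := exists_pair α hne hc
    obtain ⟨ha, hb⟩ := (pair_lower a b hab).2 (le_of_eq hd)
    rw [ha, hb]
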